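/- arXiv:2602.21846 — 2 statements merged into one kernel-verified Lean document; each statement's English description precedes it below -/
import Mathlib

section
/- Fix N ∈ ℕ and points 0 < x₁ < x₂ < ⋯ < x_N. The N × N Gram matrix K with entries K_{ij} = min(x_i, x_j) is invertible, and its inverse is the symmetric tridiagonal matrix with diagonal entries b_i = (x_{i+1} − x_{i−1}) / ((x_i − x_{i−1})(x_{i+1} − x_i)) for 1 ≤ i ≤ N−1 (with the convention x₀ = 0), b_N = 1/(x_N − x_{N−1}), and off-diagonal entries c_i = −1/(x_{i+1} − x_i) on the first sub- and super-diagonal. -/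
/-!
Column `j` of `K` samples the broken line `t ↦ min t x_j` at `x_1, …, x_N`, and row `i` of `B`
is a discrete second derivative: the slope of a function on `[x_{i-1}, x_i]` minus its slope on
`[x_i, x_{i+1}]` (only the first slope in the last row, and `x_0 = 0` is where the broken line
vanishes). The slopes of `t ↦ min t x_j` are `1` up to `x_j` and `0` after it, so `B * K = 1`,
and a one-sided inverse of a square matrix is two-sided.
-/

open Matrix Finset

def symmTridiag {R : Type*} [Zero R] (N : ℕ) (a u : ℕ → R) : Matrix (Fin N) (Fin N) R :=
  Matrix.of fun i j =>
    if (i : ℕ) = j then a i else if (i : ℕ) + 1 = j then u i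
    else if (j : ℕ) + 1 = i then u j else 0

lemma symmTridiag_mulVec {R : Type*} [Semiring R] {N : ℕ} (a u w : ℕ → R) (i : Fin N) :
    (symmTridiag N a u *ᵥ fun k => w k) i =
      a i * w i + (if (i : ℕ) + 1 < N then u i * w (i + 1) else 0) +
        (if 0 < (i : ℕ) then u (i - 1) * w (i - 1) else 0) := by
  have hrow : ∀ k : ℕ, (if (i : ℕ) = k then a i else if (i : ℕ) + 1 = k then u i
      else if k + 1 = i then u k else 0) * w k =
      (if (i : ℕ) = k then a i * w i else 0) + (if (i : ℕ) + 1 = k then u i * w (i + 1) else 0) +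
        (if (i : ℕ) - 1 = k then (if 0 < (i : ℕ) then u (i - 1) * w (i - 1) else 0) else 0) := by
    intro k
    split_ifs <;> subst_vars <;> first | omega | simp
  have hpred : (i : ℕ) - 1 < N := by omega
  simp only [mulVec, dotProduct, symmTridiag, of_apply]
  rw [Fin.sum_univ_eq_sum_range (fun k => (if (i : ℕ) = k then a i else if (i : ℕ) + 1 = k then u i
      else if k + 1 = i then u k else 0) * w k) N]
  simp only [hrow, sum_add_distrib, sum_ite_eq, mem_range, i.isLt, hpred, if_true]

noncomputable def brownianPrecision (N : ℕ) (x : ℕ → ℝ) : Matrix (Fin N) (Fin N) ℝ :=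
  symmTridiag N
    (fun i => if i + 1 = N then 1 / (x N - x (N - 1))
      else (x (i + 2) - x i) / ((x (i + 1) - x i) * (x (i + 2) - x (i + 1))))
    (fun i => -(1 / (x (i + 2) - x (i + 1))))

lemma brownianPrecision_mulVec {N : ℕ} {x : ℕ → ℝ} (hx : ∀ i, i < N → x i < x (i + 1))
    {f : ℝ → ℝ} (hf : f (x 0) = 0) (i : Fin N) :
    (brownianPrecision N x *ᵥ fun k => f (x (k + 1))) i =
      slope f (x i) (x (i + 1)) -
        if (i : ℕ) + 1 < N then slope f (x (i + 1)) (x (i + 2)) else 0 := by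
  have hd₁ : x (i + 1) - x i ≠ 0 := (sub_pos.2 (hx i i.isLt)).ne'
  have hprev : (if 0 < (i : ℕ) then -(1 / (x (i - 1 + 2) - x (i - 1 + 1))) * f (x (i - 1 + 1))
      else 0) = -(f (x i) / (x (i + 1) - x i)) := by
    rcases Nat.eq_zero_or_pos (i : ℕ) with h | h
    · simp [h, hf]
    · rw [if_pos h, Nat.sub_add_cancel h, show (i : ℕ) - 1 + 2 = i + 1 by omega]
      ring
  rw [brownianPrecision, symmTridiag_mulVec _ _ (fun k => f (x (k + 1))), hprev,
    slope_def_field, slope_def_field]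
  by_cases hlast : (i : ℕ) + 1 < N
  · have hd₂ : x (i + 2) - x (i + 1) ≠ 0 := (sub_pos.2 (hx (i + 1) hlast)).ne'
    simp only [if_pos hlast, if_neg hlast.ne]
    field_simp
    ring
  · have hN : N = i + 1 := by omega
    simp only [if_neg hlast, if_pos hN.symm]
    rw [show x N - x (N - 1) = x (i + 1) - x i by simp only [hN, Nat.add_sub_cancel]]
    field_simp
    ring

section slope_min

variable {𝕜 : Type*} [Field 𝕜] [LinearOrder 𝕜] {a b c : 𝕜}

lemma slope_min_const_of_le (hab : a ≠ b) (ha : a ≤ c) (hb : b ≤ c) :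
    slope (fun t => min t c) a b = 1 := by
  rw [slope_def_field, min_eq_left ha, min_eq_left hb]
  exact div_self (sub_ne_zero.2 hab.symm)

lemma slope_min_const_of_ge (ha : c ≤ a) (hb : c ≤ b) : slope (fun t => min t c) a b = 0 := by
  rw [slope_def_field, min_eq_right ha, min_eq_right hb, sub_self, zero_div]

end slope_min

lemma apply_le_apply_of_lt_succ {β : Type*} [Preorder β] {N : ℕ} {x : ℕ → β}
    (hx : ∀ i, i < N → x i < x (i + 1)) {a b : ℕ} (hab : a ≤ b) (hb : b ≤ N) : x a ≤ x b :=
  (strictMonoOn_Iic_of_lt_succ fun m hm => by simpa using hx m hm).monotoneOn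
    (Set.mem_Iic.2 (hab.trans hb)) (Set.mem_Iic.2 hb) hab

lemma slope_min_apply_succ {N : ℕ} {x : ℕ → ℝ} (hx : ∀ i, i < N → x i < x (i + 1))
    {j m : ℕ} (hj : j < N) (hm : m < N) :
    slope (fun t => min t (x (j + 1))) (x m) (x (m + 1)) = if m ≤ j then 1 else 0 := by
  have hle := fun {a b : ℕ} => apply_le_apply_of_lt_succ hx (a := a) (b := b)
  split_ifs with hmj
  · exact slope_min_const_of_le (hx m hm).ne (hle (by omega) (by omega)) (hle (by omega) hj)
  · exact slope_min_const_of_ge (hle (by omega) (by omega)) (hle (by omega) (by omega))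

def brownianGram (N : ℕ) (x : ℕ → ℝ) : Matrix (Fin N) (Fin N) ℝ :=
  of fun i j => min (x (i + 1)) (x (j + 1))

lemma brownianPrecision_mul_brownianGram {N : ℕ} {x : ℕ → ℝ} (hx0 : x 0 = 0)
    (hx : ∀ i, i < N → x i < x (i + 1)) : brownianPrecision N x * brownianGram N x = 1 := by
  ext i j
  have hi := i.isLt
  have hj := j.isLt
  have hf : min (x 0) (x (j + 1)) = 0 := by
    rw [hx0]
    exact min_eq_left (hx0 ▸ apply_le_apply_of_lt_succ hx (Nat.zero_le _) hj)
  have hslope := fun {m : ℕ} => slope_min_apply_succ hx (m := m) hj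
  rw [show (brownianPrecision N x * brownianGram N x) i j =
      (brownianPrecision N x *ᵥ fun k => min (x (k + 1)) (x (j + 1))) i from rfl,
    brownianPrecision_mulVec hx (f := fun t => min t (x (j + 1))) hf i, one_apply, hslope hi]
  rcases lt_trichotomy i j with hij | rfl | hij
  · have hij' : (i : ℕ) < j := hij
    rw [if_pos (show (i : ℕ) + 1 < N by omega), hslope (by omega), if_pos hij'.le,
      if_pos (show (i : ℕ) + 1 ≤ j by omega), if_neg hij.ne, sub_self]
  · rw [if_pos le_rfl, if_pos rfl]
    split_ifs with hlast
    · rw [hslope hlast, if_neg (by omega), sub_zero]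
    · rw [sub_zero]
  · have hij' : (j : ℕ) < i := hij
    rw [if_neg (by omega), if_neg hij.ne']
    split_ifs with hlast
    · rw [hslope hlast, if_neg (by omega), sub_zero]
    · rw [sub_zero]

theorem stmt3_general (N : ℕ) (x : ℕ → ℝ)
    (hx0 : x 0 = 0)
    (hmono : ∀ i, i < N → x i < x (i + 1))
    (K B : Matrix (Fin N) (Fin N) ℝ)
    (hK : ∀ i j : Fin N, K i j = min (x ((i : ℕ) + 1)) (x ((j : ℕ) + 1)))
    (hB : ∀ i j : Fin N,
      B i j =
        if (i : ℕ) = (j : ℕ) then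
          (if (i : ℕ) + 1 = N then 1 / (x N - x (N - 1))
           else (x ((i : ℕ) + 2) - x (i : ℕ)) /
             ((x ((i : ℕ) + 1) - x (i : ℕ)) * (x ((i : ℕ) + 2) - x ((i : ℕ) + 1))))
        else if (i : ℕ) + 1 = (j : ℕ) then -(1 / (x ((i : ℕ) + 2) - x ((i : ℕ) + 1)))
        else if (j : ℕ) + 1 = (i : ℕ) then -(1 / (x ((j : ℕ) + 2) - x ((j : ℕ) + 1)))
        else 0) :
    K * B = 1 ∧ B * K = 1 := by
  obtain rfl : K = brownianGram N x := Matrix.ext hK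
  obtain rfl : B = brownianPrecision N x := Matrix.ext hB
  have hBK := brownianPrecision_mul_brownianGram hx0 hmono
  exact ⟨mul_eq_one_comm.mpr hBK, hBK⟩

/-- The Gram matrix of the Brownian motion kernel `min` at points
`0 = x₀ < x₁ < ⋯ < x_N` (matrix entries `K i j = min (x (i+1)) (x (j+1))`)
is invertible, with tridiagonal inverse `B` as stated. -/
theorem stmt3 (N : ℕ) (hN : 0 < N) (x : ℕ → ℝ)
    (hx0 : x 0 = 0)
    (hmono : ∀ i, i < N → x i < x (i + 1))
    (K B : Matrix (Fin N) (Fin N) ℝ)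
    (hK : ∀ i j : Fin N, K i j = min (x ((i : ℕ) + 1)) (x ((j : ℕ) + 1)))
    (hB : ∀ i j : Fin N,
      B i j =
        if (i : ℕ) = (j : ℕ) then
          (if (i : ℕ) + 1 = N then 1 / (x N - x (N - 1))
           else (x ((i : ℕ) + 2) - x (i : ℕ)) /
             ((x ((i : ℕ) + 1) - x (i : ℕ)) * (x ((i : ℕ) + 2) - x ((i : ℕ) + 1))))
        else if (i : ℕ) + 1 = (j : ℕ) then -(1 / (x ((i : ℕ) + 2) - x ((i : ℕ) + 1)))
        else if (j : ℕ) + 1 = (i : ℕ) then -(1 / (x ((j : ℕ) + 2) - x ((j : ℕ) + 1)))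
        else 0) :
    K * B = 1 ∧ B * K = 1 :=
  stmt3_general N x hx0 hmono K B hK hB
end

section
/- Let H ∈ (0,1) and let f be a centered Gaussian process on [0,T] with the integrated fractional Brownian motion kernel k_{1,H}. Then for points x_{n−1} < x_n < x_{n+1} with increments Δ₀ = x_n − x_{n−1} and Δ₁ = x_{n+1} − x_n, E[(Δ₀(f(x_{n+1}) − f(x_n)) − Δ₁(f(x_n) − f(x_{n−1})))²] = Δ₁ Δ₀ (Δ₁ + Δ₀) [(Δ₀ + Δ₁)^{2H+1} − Δ₁^{2H+1} − Δ₀^{2H+1}] / (2(H+1)(2H+1)). -/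
/-!
The weights `(c - b, -(c - a), b - a)` at the points `(a, b, c)` annihilate constants and
linear functions. Hence in the quadratic form `∑ i j, wᵢ wⱼ k(xᵢ, xⱼ)` of the kernel every term of
the form `t g(s)` or `h(s)` drops out, and only the term `|s - t| ^ (2H + 2)` survives; for three
points it factors as `(c - b)(b - a)(c - a)` times the bracket in the claim.
-/

open MeasureTheory

theorem integral_sq_sum_mul_eq_sum_sum {Ω ι : Type*} [MeasurableSpace Ω] [Fintype ι]
    {μ : Measure Ω} {X : ι → Ω → ℝ} (hX : ∀ i, MemLp (X i) 2 μ) (w : ι → ℝ) :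
    ∫ ω, (∑ i, w i * X i ω) ^ 2 ∂μ = ∑ i, ∑ j, w i * w j * ∫ ω, X i ω * X j ω ∂μ := by
  have hint : ∀ i j, Integrable (fun ω ↦ w i * w j * (X i ω * X j ω)) μ := fun i j ↦
    ((hX i).integrable_mul (hX j)).const_mul _
  have hsq : ∀ ω, (∑ i, w i * X i ω) ^ 2 = ∑ i, ∑ j, w i * w j * (X i ω * X j ω) := fun ω ↦ by
    rw [sq, Finset.sum_mul_sum]
    exact Finset.sum_congr rfl fun i _ ↦ Finset.sum_congr rfl fun j _ ↦ by ring
  simp_rw [hsq, ← integral_const_mul]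
  rw [integral_finsetSum _ fun i _ ↦ integrable_finsetSum _ fun j _ ↦ hint i j]
  exact Finset.sum_congr rfl fun i _ ↦ integral_finsetSum _ fun j _ ↦ hint i j

noncomputable def integratedFBMKernel (H s t : ℝ) : ℝ :=
  (1 / (2 * (2 * H + 1))) *
    (t * s ^ (2 * H + 1) + s * t ^ (2 * H + 1)
      - (1 / (2 * (H + 1))) * (s ^ (2 * H + 2) + t ^ (2 * H + 2) - |s - t| ^ (2 * H + 2)))

theorem sum_sum_mul_integratedFBMKernel_of_sum_eq_zero {ι : Type*} [Fintype ι] (H : ℝ)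
    {w x : ι → ℝ} (hw : ∑ i, w i = 0) (hwx : ∑ i, w i * x i = 0) :
    ∑ i, ∑ j, w i * w j * integratedFBMKernel H (x i) (x j)
      = 1 / (2 * (2 * H + 1)) * (1 / (2 * (H + 1))) *
          ∑ i, ∑ j, w i * w j * |x i - x j| ^ (2 * H + 2) := by
  set g : ℝ → ℝ := fun s ↦ s ^ (2 * H + 1)
  set h : ℝ → ℝ := fun s ↦ s ^ (2 * H + 2)
  have hterm : ∀ i j, w i * w j * integratedFBMKernel H (x i) (x j)
      = 1 / (2 * (2 * H + 1)) * ((w i * g (x i)) * (w j * x j) + (w i * x i) * (w j * g (x j))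
          - 1 / (2 * (H + 1)) * ((w i * h (x i)) * w j + w i * (w j * h (x j))))
        + 1 / (2 * (2 * H + 1)) * (1 / (2 * (H + 1))) *
            (w i * w j * |x i - x j| ^ (2 * H + 2)) := by
    intro i j
    simp only [integratedFBMKernel, g, h]
    ring
  simp only [hterm, Finset.sum_add_distrib, Finset.sum_sub_distrib, ← Finset.mul_sum,
    ← Finset.sum_mul, hw, hwx]
  ring

theorem sum_sum_mul_abs_sub_rpow_three {a b c : ℝ} (hab : a < b) (hbc : b < c) {p : ℝ}
    (hp : p + 1 ≠ 0) :
    ∑ i, ∑ j, ![c - b, -(c - a), b - a] i * ![c - b, -(c - a), b - a] j *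
        |![a, b, c] i - ![a, b, c] j| ^ (p + 1)
      = 2 * (c - b) * (b - a) * (c - a) * ((c - a) ^ p - (c - b) ^ p - (b - a) ^ p) := by
  simp only [Fin.sum_univ_three, Matrix.cons_val_zero, Matrix.cons_val_one, Matrix.cons_val_two,
    Matrix.head_cons, Matrix.tail_cons, sub_self, abs_zero, Real.zero_rpow hp]
  rw [abs_sub_comm a b, abs_sub_comm a c, abs_sub_comm b c, abs_of_pos (sub_pos.2 hab),
    abs_of_pos (sub_pos.2 hbc), abs_of_pos (sub_pos.2 (hab.trans hbc)),
    Real.rpow_add_one (sub_pos.2 hab).ne', Real.rpow_add_one (sub_pos.2 hbc).ne',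
    Real.rpow_add_one (sub_pos.2 (hab.trans hbc)).ne']
  ring

theorem stmt8_general {Ω : Type*} [MeasurableSpace Ω] (ℙ : Measure Ω)
    (T H : ℝ) (hH : H ∈ Set.Ioo (0 : ℝ) 1)
    (f : ℝ → Ω → ℝ)
    (hL2 : ∀ t ∈ Set.Icc (0 : ℝ) T, MemLp (f t) 2 ℙ)
    (hcov : ∀ s ∈ Set.Icc (0 : ℝ) T, ∀ t ∈ Set.Icc (0 : ℝ) T,
      ∫ ω, f s ω * f t ω ∂ℙ
        = (1 / (2 * (2 * H + 1))) *
            (t * s ^ (2 * H + 1) + s * t ^ (2 * H + 1)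
              - (1 / (2 * (H + 1))) *
                  (s ^ (2 * H + 2) + t ^ (2 * H + 2) - |s - t| ^ (2 * H + 2)))) :
    ∀ a ∈ Set.Icc (0 : ℝ) T, ∀ b ∈ Set.Icc (0 : ℝ) T, ∀ c ∈ Set.Icc (0 : ℝ) T,
      a < b → b < c →
      ∫ ω, ((b - a) * (f c ω - f b ω) - (c - b) * (f b ω - f a ω)) ^ 2 ∂ℙ
        = (c - b) * (b - a) * ((c - b) + (b - a)) *
            (((b - a) + (c - b)) ^ (2 * H + 1)
              - (c - b) ^ (2 * H + 1) - (b - a) ^ (2 * H + 1))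
          / (2 * (H + 1) * (2 * H + 1)) := by
  intro a ha b hb c hc hab hbc
  set w : Fin 3 → ℝ := ![c - b, -(c - a), b - a]
  set x : Fin 3 → ℝ := ![a, b, c]
  have hx : ∀ i, x i ∈ Set.Icc 0 T := by
    intro i; fin_cases i <;> assumption
  have hw : ∑ i, w i = 0 := by simp [w, Fin.sum_univ_three]
  have hwx : ∑ i, w i * x i = 0 := by
    simp only [Fin.sum_univ_three, w, x, Matrix.cons_val_zero, Matrix.cons_val_one, Matrix.cons_val]
    ring
  have hcomb : ∀ ω, (b - a) * (f c ω - f b ω) - (c - b) * (f b ω - f a ω)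
      = ∑ i, w i * f (x i) ω := by
    intro ω
    simp only [Fin.sum_univ_three, w, x, Matrix.cons_val_zero, Matrix.cons_val_one, Matrix.cons_val]
    ring
  have hk : ∀ i j, ∫ ω, f (x i) ω * f (x j) ω ∂ℙ = integratedFBMKernel H (x i) (x j) :=
    fun i j ↦ hcov _ (hx i) _ (hx j)
  simp_rw [hcomb, integral_sq_sum_mul_eq_sum_sum (fun i ↦ hL2 _ (hx i)), hk]
  rw [sum_sum_mul_integratedFBMKernel_of_sum_eq_zero H hw hwx,
    show 2 * H + 2 = 2 * H + 1 + 1 by ring,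
    sum_sum_mul_abs_sub_rpow_three hab hbc (by linarith [hH.1]),
    show c - a = b - a + (c - b) by ring]
  have hH₁ : H + 1 ≠ 0 := by linarith [hH.1]
  have hH₂ : 2 * H + 1 ≠ 0 := by linarith [hH.1]
  field_simp
  ring

/-- For a centered Gaussian process with the integrated fractional Brownian motion
covariance `k_{1,H}`, the stated second-moment identity for the weighted second
difference holds. -/
theorem stmt8 {Ω : Type*} [MeasurableSpace Ω] (ℙ : Measure Ω) [IsProbabilityMeasure ℙ]
    (T H : ℝ) (hT : 0 < T) (hH : H ∈ Set.Ioo (0 : ℝ) 1)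
    (f : ℝ → Ω → ℝ)
    (hL2 : ∀ t ∈ Set.Icc (0 : ℝ) T, MemLp (f t) 2 ℙ)
    (hcen : ∀ t ∈ Set.Icc (0 : ℝ) T, ∫ ω, f t ω ∂ℙ = 0)
    (hcov : ∀ s ∈ Set.Icc (0 : ℝ) T, ∀ t ∈ Set.Icc (0 : ℝ) T,
      ∫ ω, f s ω * f t ω ∂ℙ
        = (1 / (2 * (2 * H + 1))) *
            (t * s ^ (2 * H + 1) + s * t ^ (2 * H + 1)
              - (1 / (2 * (H + 1))) *
                  (s ^ (2 * H + 2) + t ^ (2 * H + 2) - |s - t| ^ (2 * H + 2)))) :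
    ∀ a ∈ Set.Icc (0 : ℝ) T, ∀ b ∈ Set.Icc (0 : ℝ) T, ∀ c ∈ Set.Icc (0 : ℝ) T,
      a < b → b < c →
      ∫ ω, ((b - a) * (f c ω - f b ω) - (c - b) * (f b ω - f a ω)) ^ 2 ∂ℙ
        = (c - b) * (b - a) * ((c - b) + (b - a)) *
            (((b - a) + (c - b)) ^ (2 * H + 1)
              - (c - b) ^ (2 * H + 1) - (b - a) ^ (2 * H + 1))
          / (2 * (H + 1) * (2 * H + 1)) :=
  stmt8_general ℙ T H hH f hL2 hcov
end
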